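/- Suppose c : [ω₁]² → 2 realizes all patterns, and let τ[X] denote the associated topology on each X ⊆ ω₁. If X, Y ⊆ ω₁ have countable intersection, then there is no uncountable Z ⊆ X for which there exists a continuous injection from the subspace Z of (X, τ[X]) into (Y, τ[Y]). -/

import Mathlib

noncomputable def omega1 : Ordinal := (Cardinal.aleph 1).ord

def RealizesAllPatterns (c : Ordinal → Ordinal → Fin 2) : Prop :=
  ∀ (k l : ℕ), 0 < k → 0 < l →
    ∀ (A : Set (Fin k → Ordinal)) (B : Set (Fin l → Ordinal)),
      (∀ a ∈ A, StrictMono a ∧ ∀ i, a i < omega1) →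
      (∀ b ∈ B, StrictMono b ∧ ∀ j, b j < omega1) →
      (∀ a ∈ A, ∀ a' ∈ A, a ≠ a' → ∀ i i', a i ≠ a' i') →
      (∀ b ∈ B, ∀ b' ∈ B, b ≠ b' → ∀ j j', b j ≠ b' j') →
      ¬ A.Countable → ¬ B.Countable →
      ∀ (χ : Fin k → Fin 2) (π : Fin k → Fin l),
        ∃ a ∈ A, ∃ b ∈ B, (∀ (i : Fin k) (j : Fin l), a i < b j) ∧
          ∀ i : Fin k, c (a i) (b (π i)) = χ i

/-- `W_α = {α} ∪ {β < ω₁ : α < β and c(α,β) = 1}`. -/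
noncomputable def Wset (c : Ordinal → Ordinal → Fin 2) (α : Ordinal) : Set Ordinal :=
  {α} ∪ {β | β < omega1 ∧ α < β ∧ c α β = 1}

/-- The topology `τ[X]` on `X ⊆ ω₁`: generated by the subbasis consisting of the
sets `W_ξ ∩ X` and `X \ W_ξ` for `ξ ∈ X` (each `W_ξ ∩ X` is declared clopen). -/
noncomputable def tauTop (c : Ordinal → Ordinal → Fin 2) (X : Set Ordinal) :
    TopologicalSpace X :=
  TopologicalSpace.generateFrom
    ({s | ∃ ξ ∈ X, s = {x : X | x.val ∈ Wset c ξ}} ∪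
     {s | ∃ ξ ∈ X, s = {x : X | x.val ∉ Wset c ξ}})

/-!
Continuity of `f` at `z` yields a finite `F z ⊆ X` such that every `w` whose membership in
the sets `W_ξ`, `ξ ∈ F z`, is the same as that of `z` satisfies `f w ∈ W_{f z}`. Discard the
countably many `z` with `z ∈ Y` or `f z ∈ X`, pass to an uncountable Δ-system of the sets `F z`
with root `R`, and fix the membership pattern of `z` in the `W_ξ`, `ξ ∈ R`. The families
`{f z} ∪ (F z \ R)` and `{z, f z}` are then pairwise disjoint, so the coloring realizes a pair
`z, w` with `c(ξ, w) = [z ∈ W_ξ]` for `ξ ∈ F z \ R` and `c(f z, f w) = 0`, everything on the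
left lying below `w` and `f w`. Then `w` has the pattern of `z` on `F z`, so `f w ∈ W_{f z}`,
i.e. `c(f z, f w) = 1`.
-/

open Set Function TopologicalSpace

section Uncountable

variable {ι α : Type*}

theorem exists_not_countable_fiber [Countable α] {T : Set ι} (hT : ¬T.Countable) (g : ι → α) :
    ∃ a, ¬{z ∈ T | g z = a}.Countable := by
  by_contra! h
  refine hT ((countable_iUnion h).mono fun z hz => ?_)
  exact mem_iUnion_of_mem (g z) ⟨hz, rfl⟩

theorem exists_pairwise_disjoint_of_countable_incidence (F : ι → Finset α) {T : Set ι}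
    (hT : ¬T.Countable) (hinc : ∀ x, {z ∈ T | x ∈ F z}.Countable) :
    ∃ T' ⊆ T, ¬T'.Countable ∧ T'.Pairwise (Disjoint on F) := by
  obtain ⟨M, hM⟩ := zorn_subset {S | S ⊆ T ∧ S.Pairwise (Disjoint on F)} fun C hC hchain =>
    ⟨⋃₀ C, ⟨sUnion_subset fun S hS => (hC hS).1, hchain.pairwise_sUnion.2 fun S hS => (hC hS).2⟩,
      fun _ => subset_sUnion_of_mem⟩
  refine ⟨M, hM.prop.1, fun hMc => hT ?_, hM.prop.2⟩
  have hcover : T ⊆ M ∪ ⋃ x ∈ ⋃ z ∈ M, (F z : Set α), {z ∈ T | x ∈ F z} := by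
    intro z hz
    by_cases hzM : z ∈ M
    · exact Or.inl hzM
    obtain ⟨z', hz'M, hmeet⟩ : ∃ z' ∈ M, ¬Disjoint (F z) (F z') := by
      by_contra! hdisj
      refine hzM (hM.mem_of_prop_insert ⟨insert_subset hz hM.prop.1, ?_⟩)
      exact pairwise_insert.2 ⟨hM.prop.2, fun z' hz' _ => ⟨hdisj z' hz', (hdisj z' hz').symm⟩⟩
    obtain ⟨x, hxz, hxz'⟩ := Finset.not_disjoint_iff.1 hmeet
    exact Or.inr (mem_biUnion (mem_biUnion hz'M hxz') ⟨hz, hxz⟩)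
  exact (hMc.union ((hMc.biUnion fun z _ => (F z).countable_toSet).biUnion fun x _ =>
    hinc x)).mono hcover

theorem exists_delta_system_of_card_eq [DecidableEq α] (n : ℕ) (F : ι → Finset α) {T : Set ι}
    (hcard : ∀ z ∈ T, (F z).card = n) (hT : ¬T.Countable) :
    ∃ R, ∃ T' ⊆ T, ¬T'.Countable ∧ T'.Pairwise fun z z' => F z ∩ F z' = R := by
  induction n generalizing F T with
  | zero =>
    refine ⟨∅, T, subset_rfl, hT, fun z hz z' _ _ => ?_⟩
    simp only [Finset.card_eq_zero.1 (hcard z hz), Finset.empty_inter]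
  | succ n ih =>
    by_cases hinc : ∀ x, {z ∈ T | x ∈ F z}.Countable
    · obtain ⟨T', hT'T, hT', hdisj⟩ := exists_pairwise_disjoint_of_countable_incidence F hT hinc
      exact ⟨∅, T', hT'T, hT', hdisj.mono' fun z z' => Finset.disjoint_iff_inter_eq_empty.1⟩
    obtain ⟨x, hx⟩ := not_forall.1 hinc
    obtain ⟨R, T', hT'x, hT', hR⟩ := ih (fun z => (F z).erase x) (T := {z ∈ T | x ∈ F z})
      (fun z hz => by rw [Finset.card_erase_of_mem hz.2, hcard z hz.1, Nat.add_sub_cancel]) hx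
    refine ⟨insert x R, T', fun z hz => (hT'x hz).1, hT', fun z hz z' hz' hne => ?_⟩
    change F z ∩ F z' = insert x R
    rw [← hR hz hz' hne, Finset.erase_inter, Finset.inter_erase, Finset.erase_idem,
      Finset.insert_erase (Finset.mem_inter.2 ⟨(hT'x hz).2, (hT'x hz').2⟩)]

theorem exists_delta_system [DecidableEq α] (F : ι → Finset α) {T : Set ι} (hT : ¬T.Countable) :
    ∃ R, ∃ T' ⊆ T, ¬T'.Countable ∧ T'.Pairwise fun z z' => F z ∩ F z' = R := by
  obtain ⟨n, hn⟩ := exists_not_countable_fiber hT fun z => (F z).card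
  obtain ⟨R, T', hT'n, hT', hR⟩ := exists_delta_system_of_card_eq n F (fun z hz => hz.2) hn
  exact ⟨R, T', hT'n.trans (sep_subset _ _), hT', hR⟩

theorem Set.Pairwise.disjoint_insert_sdiff [DecidableEq α] {T : Set ι} {F : ι → Finset α}
    {R : Finset α} {y : ι → α} (hR : T.Pairwise fun z z' => F z ∩ F z' = R) (hy : InjOn y T)
    (hyF : ∀ z ∈ T, ∀ z' ∈ T, y z ∉ F z') :
    T.Pairwise (Disjoint on fun z => ((insert (y z) (F z \ R) : Finset α) : Set α)) := by
  intro z hz z' hz' hne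
  have hFR : Disjoint (F z \ R) (F z' \ R) := Finset.disjoint_left.2 fun ξ hξ hξ' =>
    (Finset.mem_sdiff.1 hξ).2 (hR hz hz' hne ▸
      Finset.mem_inter.2 ⟨(Finset.mem_sdiff.1 hξ).1, (Finset.mem_sdiff.1 hξ').1⟩)
  simp only [onFun, Finset.disjoint_coe, Finset.disjoint_insert_left,
    Finset.disjoint_insert_right, Finset.mem_insert, Finset.mem_sdiff, not_or, not_and]
  exact ⟨⟨hy.ne hz' hz hne.symm, fun h => absurd h (hyF z' hz' z hz)⟩,
    fun h => absurd h (hyF z hz z' hz'), hFR⟩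

theorem Set.Pairwise.injOn_of_disjoint_range {k : ℕ} (hk : 0 < k) {e : ι → Fin k → α}
    {T : Set ι} (h : T.Pairwise (Disjoint on fun z => range (e z))) : InjOn e T := by
  intro z hz z' hz' heq
  by_contra hne
  exact disjoint_range_iff.1 (h hz hz' hne) ⟨0, hk⟩ ⟨0, hk⟩ (congrFun heq _)

theorem Set.Pairwise.image_apply_ne {k : ℕ} {e : ι → Fin k → α} {T : Set ι}
    (h : T.Pairwise (Disjoint on fun z => range (e z))) :
    ∀ x ∈ e '' T, ∀ x' ∈ e '' T, x ≠ x' → ∀ i i', x i ≠ x' i' := by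
  rintro _ ⟨z, hz, rfl⟩ _ ⟨z', hz', rfl⟩ hne
  exact disjoint_range_iff.1 (h hz hz' (ne_of_apply_ne e hne))

end Uncountable

section Patterns

variable {ι : Type*} {c : Ordinal → Ordinal → Fin 2}

theorem RealizesAllPatterns.exists_of_tuples (hc : RealizesAllPatterns c)
    {k l : ℕ} (hk : 0 < k) (hl : 0 < l) {T : Set ι}
    (hT : ¬T.Countable) (a : ι → Fin k → Ordinal) (b : ι → Fin l → Ordinal)
    (ha : ∀ z ∈ T, StrictMono (a z) ∧ ∀ i, a z i < omega1)
    (hb : ∀ z ∈ T, StrictMono (b z) ∧ ∀ j, b z j < omega1)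
    (ha' : T.Pairwise (Disjoint on fun z => range (a z)))
    (hb' : T.Pairwise (Disjoint on fun z => range (b z))) (χ : Fin k → Fin 2) (π : Fin k → Fin l) :
    ∃ z ∈ T, ∃ w ∈ T, (∀ i j, a z i < b w j) ∧ ∀ i, c (a z i) (b w (π i)) = χ i := by
  obtain ⟨_, ⟨z, hz, rfl⟩, _, ⟨w, hw, rfl⟩, hlt, hcol⟩ :=
    hc k l hk hl (a '' T) (b '' T) (forall_mem_image.2 ha) (forall_mem_image.2 hb)
      ha'.image_apply_ne hb'.image_apply_ne
      (fun h => hT (countable_of_injective_of_countable_image (ha'.injOn_of_disjoint_range hk) h))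
      (fun h => hT (countable_of_injective_of_countable_image (hb'.injOn_of_disjoint_range hl) h))
      χ π
  exact ⟨z, hz, w, hw, hlt, hcol⟩

theorem RealizesAllPatterns.exists_of_finsets_of_card_eq (hc : RealizesAllPatterns c)
    {k l : ℕ} (hk : 0 < k) {T : Set ι} (hT : ¬T.Countable)
    (A : ι → Finset Ordinal) (β : ι → Fin l → Ordinal) (hAk : ∀ z ∈ T, (A z).card = k)
    (hA : ∀ z ∈ T, ∀ ξ ∈ A z, ξ < omega1) (hβ : ∀ z ∈ T, Injective (β z) ∧ ∀ j, β z j < omega1)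
    (hA' : T.Pairwise (Disjoint on fun z => (A z : Set Ordinal)))
    (hβ' : T.Pairwise (Disjoint on fun z => range (β z)))
    (π : ι → Ordinal → Fin l) (χ : ι → Ordinal → Fin 2) :
    ∃ z ∈ T, ∃ w ∈ T, ∀ ξ ∈ A z, (∀ j, ξ < β w j) ∧ c ξ (β w (π z ξ)) = χ z ξ := by
  obtain ⟨z₀, hz₀⟩ : T.Nonempty := nonempty_iff_ne_empty.2 fun h => hT (h ▸ countable_empty)
  obtain ⟨ξ₀, hξ₀⟩ := Finset.card_pos.1 (hAk z₀ hz₀ ▸ hk)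
  have hl : 0 < l := (π z₀ ξ₀).pos
  have hsort : ∀ z ∈ T, ∃ e : Fin k → Ordinal, StrictMono e ∧ range e = A z := fun z hz =>
    ⟨(A z).orderEmbOfFin (hAk z hz), (A z).orderEmbOfFin (hAk z hz) |>.strictMono,
      (A z).range_orderEmbOfFin (hAk z hz)⟩
  choose! a ha_mono ha_range using hsort
  -- sort each `β z`; the sorting permutation and the pattern along `a z` take finitely many values
  let b z := β z ∘ Tuple.sort (β z)
  have hb_sort : ∀ z j, b z ((Tuple.sort (β z)).symm j) = β z j := fun z j => by simp [b]
  have hb_range : ∀ z, range (b z) = range (β z) := fun z =>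
    (Tuple.sort (β z)).surjective.range_comp _
  obtain ⟨⟨s, p⟩, hTp⟩ := exists_not_countable_fiber hT fun z =>
    (Tuple.sort (β z), fun i => (χ z (a z i), π z (a z i)))
  set Tp := {z ∈ T | (Tuple.sort (β z), fun i => (χ z (a z i), π z (a z i))) = (s, p)}
  have hTpT : Tp ⊆ T := fun z hz => hz.1
  obtain ⟨z, hz, w, hw, hlt, hcol⟩ := hc.exists_of_tuples hk hl hTp a b
    (fun z hz => ⟨ha_mono z (hTpT hz), fun i => hA z hz.1 _ <| by
      rw [← Finset.mem_coe, ← ha_range z (hTpT hz)]; exact mem_range_self i⟩)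
    (fun z hz => ⟨(Tuple.monotone_sort _).strictMono_of_injective
        ((hβ z hz.1).1.comp (Equiv.injective _)),
      fun j => (hβ z hz.1).2 _⟩)
    (fun z hz z' hz' hne => by
      simpa only [onFun, ha_range z hz.1, ha_range z' hz'.1] using hA' (hTpT hz) (hTpT hz') hne)
    (fun z hz z' hz' hne => by
      simpa only [onFun, hb_range] using hβ' (hTpT hz) (hTpT hz') hne)
    (fun i => (p i).1) (fun i => s.symm (p i).2)
  obtain ⟨-, hzp⟩ := Prod.mk_inj.1 hz.2
  obtain ⟨hws, -⟩ := Prod.mk_inj.1 hw.2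
  refine ⟨z, hTpT hz, w, hTpT hw, fun ξ hξ => ?_⟩
  obtain ⟨i, rfl⟩ : ξ ∈ range (a z) := ha_range z hz.1 ▸ hξ
  have hpi : p i = (χ z (a z i), π z (a z i)) := (congrFun hzp i).symm
  refine ⟨fun j => hb_sort w j ▸ hlt i _, ?_⟩
  simpa only [hpi, ← hws, hb_sort] using hcol i

theorem RealizesAllPatterns.exists_of_finsets (hc : RealizesAllPatterns c)
    {l : ℕ} {T : Set ι} (hT : ¬T.Countable)
    (A : ι → Finset Ordinal) (β : ι → Fin l → Ordinal)
    (hA : ∀ z ∈ T, ∀ ξ ∈ A z, ξ < omega1) (hβ : ∀ z ∈ T, Injective (β z) ∧ ∀ j, β z j < omega1)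
    (hA' : T.Pairwise (Disjoint on fun z => (A z : Set Ordinal)))
    (hβ' : T.Pairwise (Disjoint on fun z => range (β z)))
    (π : ι → Ordinal → Fin l) (χ : ι → Ordinal → Fin 2) :
    ∃ z ∈ T, ∃ w ∈ T, ∀ ξ ∈ A z, (∀ j, ξ < β w j) ∧ c ξ (β w (π z ξ)) = χ z ξ := by
  obtain ⟨k, hTk⟩ := exists_not_countable_fiber hT fun z => (A z).card
  have hTkT : {z ∈ T | (A z).card = k} ⊆ T := sep_subset _ _
  rcases k.eq_zero_or_pos with rfl | hk
  · obtain ⟨z, hz, hz0⟩ : {z ∈ T | (A z).card = 0}.Nonempty :=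
      nonempty_iff_ne_empty.2 fun h => hTk (h ▸ countable_empty)
    exact ⟨z, hz, z, hz, fun ξ hξ => by simp [Finset.card_eq_zero.1 hz0] at hξ⟩
  obtain ⟨z, hz, w, hw, h⟩ := hc.exists_of_finsets_of_card_eq hk hTk A β (fun z hz => hz.2)
    (fun z hz => hA z hz.1) (fun z hz => hβ z hz.1) (hA'.mono hTkT) (hβ'.mono hTkT) π χ
  exact ⟨z, hz.1, w, hw.1, h⟩

theorem mem_Wset_iff {ξ β : Ordinal} (hξβ : ξ < β)
    (hβ : β < omega1) : β ∈ Wset c ξ ↔ c ξ β = 1 := by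
  simp [Wset, hξβ.ne', hξβ, hβ]

variable {T : Set ι} {x y : ι → Ordinal} {F : ι → Finset Ordinal}

theorem RealizesAllPatterns.exists_agree_of_delta_system (hc : RealizesAllPatterns c)
    (hT : ¬T.Countable) (hx : InjOn x T) (hy : InjOn y T)
    (hω : ∀ z ∈ T, x z < omega1 ∧ y z < omega1 ∧ ∀ ξ ∈ F z, ξ < omega1)
    (hxy : ∀ z ∈ T, ∀ z' ∈ T, x z ≠ y z' ∧ y z ∉ F z') {R : Finset Ordinal}
    (hR : T.Pairwise fun z z' => F z ∩ F z' = R)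
    (hroot : ∀ z ∈ T, ∀ w ∈ T, ∀ ξ ∈ R, (x w ∈ Wset c ξ ↔ x z ∈ Wset c ξ)) :
    ∃ z ∈ T, ∃ w ∈ T, y z < y w ∧ c (y z) (y w) = 0 ∧
      ∀ ξ ∈ F z, (x w ∈ Wset c ξ ↔ x z ∈ Wset c ξ) := by
  classical
  have hA : ∀ z ∈ T, ∀ ξ ∈ insert (y z) (F z \ R), ξ < omega1 := fun z hz => by
    simpa [or_imp, forall_and] using ⟨(hω z hz).2.1, fun ξ hξ _ => (hω z hz).2.2 ξ hξ⟩
  have hβ : ∀ z ∈ T, Injective ![x z, y z] ∧ ∀ j, ![x z, y z] j < omega1 := fun z hz => by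
    refine ⟨fun i j hij => ?_, Fin.forall_fin_two.2 ⟨(hω z hz).1, (hω z hz).2.1⟩⟩
    have := (hxy z hz z hz).1
    fin_cases i <;> fin_cases j <;> simp_all [eq_comm]
  have hA' : T.Pairwise
      (Disjoint on fun z => ((insert (y z) (F z \ R) : Finset Ordinal) : Set Ordinal)) :=
    hR.disjoint_insert_sdiff hy fun z hz z' hz' => (hxy z hz z' hz').2
  have hβ' : T.Pairwise (Disjoint on fun z => range ![x z, y z]) := by
    intro z hz z' hz' hne
    simp only [onFun, disjoint_range_iff, Fin.forall_fin_two, Matrix.cons_val_zero,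
      Matrix.cons_val_one]
    exact ⟨⟨hx.ne hz hz' hne, (hxy z hz z' hz').1⟩,
      ⟨((hxy z' hz' z hz).1).symm, hy.ne hz hz' hne⟩⟩
  obtain ⟨z, hz, w, hw, hzw⟩ := hc.exists_of_finsets hT (fun z => insert (y z) (F z \ R))
    (fun z => ![x z, y z]) hA hβ hA' hβ' (fun z ξ => if ξ = y z then 1 else 0)
    (fun z ξ => if ξ = y z then 0 else if x z ∈ Wset c ξ then 1 else 0)
  obtain ⟨hlt, hcol⟩ := hzw (y z) (Finset.mem_insert_self _ _)
  simp only [if_true, Matrix.cons_val_one, Matrix.cons_val_zero] at hcol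
  refine ⟨z, hz, w, hw, by simpa using hlt 1, hcol, fun ξ hξ => ?_⟩
  by_cases hξR : ξ ∈ R
  · exact hroot z hz w hw ξ hξR
  have hξy : ξ ≠ y z := fun h => (hxy z hz z hz).2 (h ▸ hξ)
  obtain ⟨hlt, hcol⟩ := hzw ξ (Finset.mem_insert_of_mem (Finset.mem_sdiff.2 ⟨hξ, hξR⟩))
  rw [mem_Wset_iff (by simpa using hlt 0) (hω w hw).1]
  simp only [hξy, if_false, Matrix.cons_val_zero] at hcol
  rw [hcol]
  split_ifs with h <;> simp [h]

theorem RealizesAllPatterns.exists_agree (hc : RealizesAllPatterns c)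
    (hT : ¬T.Countable) (hx : InjOn x T) (hy : InjOn y T)
    (hω : ∀ z ∈ T, x z < omega1 ∧ y z < omega1 ∧ ∀ ξ ∈ F z, ξ < omega1)
    (hxy : ∀ z ∈ T, ∀ z' ∈ T, x z ≠ y z' ∧ y z ∉ F z') :
    ∃ z ∈ T, ∃ w ∈ T, y z < y w ∧ c (y z) (y w) = 0 ∧
      ∀ ξ ∈ F z, (x w ∈ Wset c ξ ↔ x z ∈ Wset c ξ) := by
  obtain ⟨R, T₁, hT₁T, hT₁, hR⟩ := exists_delta_system F hT
  obtain ⟨ρ, hT₂⟩ := exists_not_countable_fiber hT₁ fun z (ξ : R) => x z ∈ Wset c ξ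
  have hT₂T : {z ∈ T₁ | (fun ξ : R => x z ∈ Wset c ξ) = ρ} ⊆ T := fun z hz => hT₁T hz.1
  obtain ⟨z, hz, w, hw, h⟩ := hc.exists_agree_of_delta_system hT₂ (hx.mono hT₂T) (hy.mono hT₂T)
    (fun z hz => hω z (hT₂T hz)) (fun z hz z' hz' => hxy z (hT₂T hz) z' (hT₂T hz'))
    (hR.mono (sep_subset _ _))
    (fun z hz w hw ξ hξ => Iff.of_eq (congrFun (hw.2.trans hz.2.symm) ⟨ξ, hξ⟩))
  exact ⟨z, hT₂T hz, w, hT₂T hw, h⟩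

end Patterns

theorem tauTop_exists_finset_of_mem_nhds {c : Ordinal → Ordinal → Fin 2} {X : Set Ordinal}
    {x : X} {U : Set X} (hU : U ∈ @nhds X (tauTop c X) x) :
    ∃ F : Finset Ordinal, ↑F ⊆ X ∧
      ∀ y : X, (∀ ξ ∈ F, ((y : Ordinal) ∈ Wset c ξ ↔ (x : Ordinal) ∈ Wset c ξ)) → y ∈ U := by
  let := tauTop c X
  obtain ⟨_, ⟨S, ⟨hSfin, hSsub⟩, rfl⟩, hxS, hSU⟩ :=
    (isTopologicalBasis_of_subbasis rfl).mem_nhds_iff.1 hU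
  have hsat : ∀ s ∈ S, ∃ ξ ∈ X,
      ∀ y : X, ((y : Ordinal) ∈ Wset c ξ ↔ (x : Ordinal) ∈ Wset c ξ) → x ∈ s → y ∈ s := by
    intro s hs
    rcases hSsub hs with ⟨ξ, hξ, rfl⟩ | ⟨ξ, hξ, rfl⟩
    · exact ⟨ξ, hξ, fun y hy hx => hy.2 hx⟩
    · exact ⟨ξ, hξ, fun y hy hx h => hx (hy.1 h)⟩
  choose! ξ hξX hξ using hsat
  refine ⟨(hSfin.image ξ).toFinset, by simpa [subset_def] using hξX,
    fun y hy => hSU fun s hs => hξ s hs y (hy _ ?_) (hxS s hs)⟩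
  simpa using ⟨s, hs, rfl⟩

theorem tauTop_exists_finset_of_continuous {c : Ordinal → Ordinal → Fin 2} {X Y : Set Ordinal}
    {Z : Set X} {f : Z → Y}
    (hf : @Continuous Z Y (induced Subtype.val (tauTop c X)) (tauTop c Y) f) (z : Z) :
    ∃ F : Finset Ordinal, ↑F ⊆ X ∧ ∀ w : Z,
      (∀ ξ ∈ F, (((w : X) : Ordinal) ∈ Wset c ξ ↔ ((z : X) : Ordinal) ∈ Wset c ξ)) →
        (f w : Ordinal) ∈ Wset c (f z) := by
  let := tauTop c X
  let := tauTop c Y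
  let : TopologicalSpace Z := induced Subtype.val (tauTop c X)
  have hV : IsOpen {y : Y | (y : Ordinal) ∈ Wset c (f z)} :=
    isOpen_generateFrom_of_mem (Or.inl ⟨_, (f z).2, rfl⟩)
  have hfV : f ⁻¹' {y : Y | (y : Ordinal) ∈ Wset c (f z)} ∈ nhds z :=
    hf.continuousAt (hV.mem_nhds (mem_union_left _ rfl))
  rw [nhds_induced] at hfV
  obtain ⟨U, hU, hUf⟩ := Filter.mem_comap.1 hfV
  obtain ⟨F, hFX, hF⟩ := tauTop_exists_finset_of_mem_nhds hU
  exact ⟨F, hFX, fun w hw => hUf (hF _ hw)⟩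

/-- **Theorem (Moore).** If `c` realizes all patterns and `X, Y ⊆ ω₁` have
countable intersection, then no uncountable subspace of `(X, τ[X])` admits a
continuous injection into `(Y, τ[Y])`. -/
theorem statement17 (c : Ordinal → Ordinal → Fin 2) (hc : RealizesAllPatterns c)
    (X Y : Set Ordinal) (hX : X ⊆ Set.Iio omega1) (hY : Y ⊆ Set.Iio omega1)
    (hXY : (X ∩ Y).Countable) :
    ¬ ∃ Z : Set X, ¬ Z.Countable ∧ ∃ f : Z → Y,
        @Continuous Z Y (TopologicalSpace.induced Subtype.val (tauTop c X))
          (tauTop c Y) f ∧ Function.Injective f := by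
  rintro ⟨Z, hZ, f, hf, hinj⟩
  choose F hFX hF using tauTop_exists_finset_of_continuous hf
  let x : Z → Ordinal := fun z => (z : X)
  let y : Z → Ordinal := fun z => f z
  have hx : Injective x := fun z z' h => Subtype.val_injective (Subtype.val_injective h)
  have hy : Injective y := fun z z' h => hinj (Subtype.val_injective h)
  set T := {z : Z | x z ∉ Y ∧ y z ∉ X}
  have hcover : (univ : Set Z) ⊆ T ∪ (x ⁻¹' (X ∩ Y) ∪ y ⁻¹' (X ∩ Y)) := fun z _ => by
    by_cases hxz : x z ∈ Y
    · exact Or.inr (Or.inl ⟨(z : X).2, hxz⟩)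
    by_cases hyz : y z ∈ X
    · exact Or.inr (Or.inr ⟨hyz, (f z).2⟩)
    exact Or.inl ⟨hxz, hyz⟩
  have hT : ¬T.Countable := fun hTc => hZ <| countable_coe_iff.1 <| countable_univ_iff.1 <|
    (hTc.union ((hXY.preimage hx).union (hXY.preimage hy))).mono hcover
  obtain ⟨z, -, w, -, hlt, hc0, hagree⟩ := hc.exists_agree hT hx.injOn hy.injOn
    (fun z _ => ⟨hX (z : X).2, hY (f z).2, fun ξ hξ => hX (hFX z hξ)⟩)
    (fun z hz z' _ => ⟨fun h => hz.1 (h ▸ (f z').2), fun h => hz.2 (hFX z' h)⟩)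
  have hfw := hF z w hagree
  rw [mem_Wset_iff hlt (hY (f w).2), hc0] at hfw
  exact absurd hfw (by decide)
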